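/- arXiv:1602.00389 — 6 statements merged into one kernel-verified Lean document; each statement's English description precedes it below -/
import Mathlib

section
/- Let O and F be finite sets of points in ℝ × ℝ equipped with the sup (L∞) metric, with F nonempty, and for o ∈ O set ρ(o) = infDist(o, F) (the distance from o to its nearest facility). If S ⊆ ℝ × ℝ is a preconnected set such that for every o ∈ O the set S is disjoint from the sphere {x : dist(x, o) = ρ(o)} (the boundary of the NN-circle of o), then the RNN set is constant on S: for all q₁, q₂ ∈ S, R(q₁) = R(q₂). -/
/-- On a preconnected set avoiding the value `r` of the continuous function
`x ↦ dist x o`, being below `r` is the same at any two points. -/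
lemma dist_lt_iff_of_preconnected {o : ℝ × ℝ} {r : ℝ} {S : Set (ℝ × ℝ)}
    (hS : IsPreconnected S)
    (hne : ∀ x ∈ S, dist x o ≠ r)
    {q₁ q₂ : ℝ × ℝ} (hq₁ : q₁ ∈ S) (hq₂ : q₂ ∈ S) :
    (dist q₁ o < r ↔ dist q₂ o < r) := by
  have himg : IsPreconnected ((fun x => dist x o) '' S) :=
    hS.image _ (Continuous.continuousOn (by continuity))
  constructor <;> intro h
  · by_contra h2
    push_neg at h2
    have h2' : r < dist q₂ o := lt_of_le_of_ne h2 (Ne.symm (hne q₂ hq₂))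
    have : r ∈ (fun x => dist x o) '' S := by
      have := himg.Icc_subset ⟨q₁, hq₁, rfl⟩ ⟨q₂, hq₂, rfl⟩
      exact this ⟨le_of_lt h, le_of_lt h2'⟩
    obtain ⟨x, hx, hxr⟩ := this
    exact hne x hx hxr
  · by_contra h2
    push_neg at h2
    have h2' : r < dist q₁ o := lt_of_le_of_ne h2 (Ne.symm (hne q₁ hq₁))
    have : r ∈ (fun x => dist x o) '' S := by
      have := himg.Icc_subset ⟨q₂, hq₂, rfl⟩ ⟨q₁, hq₁, rfl⟩
      exact this ⟨le_of_lt h, le_of_lt h2'⟩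
    obtain ⟨x, hx, hxr⟩ := this
    exact hne x hx hxr

/-- Proposition 1: on a preconnected set avoiding every NN-circle boundary,
the RNN set is constant. -/
theorem rnn_constant_on_region
    (O F : Finset (ℝ × ℝ)) (hF : F.Nonempty) (S : Set (ℝ × ℝ))
    (hS : IsPreconnected S)
    (hdisj : ∀ o ∈ O,
      Disjoint S (Metric.sphere o (Metric.infDist o (F : Set (ℝ × ℝ)))))
    (q₁ q₂ : ℝ × ℝ) (hq₁ : q₁ ∈ S) (hq₂ : q₂ ∈ S) :
    {o : ℝ × ℝ | o ∈ O ∧ ∀ f ∈ F, dist o q₁ ≤ dist o f} =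
    {o : ℝ × ℝ | o ∈ O ∧ ∀ f ∈ F, dist o q₂ ≤ dist o f} := by
  ext o
  simp only [Set.mem_setOf_eq]
  have key : ∀ oo ∈ O, ∀ q ∈ S,
      ((∀ f ∈ F, dist oo q ≤ dist oo f) ↔
        dist q oo < Metric.infDist oo (F : Set (ℝ × ℝ))) := by
    intro oo hoo q hq
    set r := Metric.infDist oo (F : Set (ℝ × ℝ)) with hr
    have hne : dist q oo ≠ r := by
      intro h
      exact (hdisj oo hoo).le_bot ⟨hq, h⟩
    have hle : (∀ f ∈ F, dist oo q ≤ dist oo f) ↔ dist oo q ≤ r := by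
      constructor
      · intro h
        by_contra hlt
        push_neg at hlt
        obtain ⟨f, hfF, hf⟩ := (Metric.infDist_lt_iff
          (by exact_mod_cast hF : (F : Set (ℝ × ℝ)).Nonempty)).mp hlt
        exact absurd (h f (by exact_mod_cast hfF)) (not_le.mpr hf)
      · intro h f hf
        exact h.trans (Metric.infDist_le_dist_of_mem (by exact_mod_cast hf))
    rw [hle, dist_comm oo q]
    exact ⟨fun h => lt_of_le_of_ne h hne, le_of_lt⟩
  have hne : ∀ o' ∈ O, True := fun _ _ => trivial
  constructor <;> rintro ⟨hoO, hd⟩ <;> refine ⟨hoO, ?_⟩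
  · rw [key o hoO q₂ hq₂]
    rw [← dist_lt_iff_of_preconnected hS
      (fun x hx h => (hdisj o hoO).le_bot ⟨hx, h⟩) hq₁ hq₂]
    exact (key o hoO q₁ hq₁).mp hd
  · rw [key o hoO q₁ hq₁]
    rw [dist_lt_iff_of_preconnected hS
      (fun x hx h => (hdisj o hoO).le_bot ⟨hx, h⟩) hq₁ hq₂]
    exact (key o hoO q₂ hq₂).mp hd
end

section
/- Let {B_i}_{i∈I} be closed balls B_i = closedBall(o_i, r_i) (r_i ≥ 0) in ℝ × ℝ with the sup metric, i.e., the axis-aligned squares [x̲_i, x̄_i] × [y̲_i, ȳ_i] with x̲_i = o_i.1 − r_i, x̄_i = o_i.1 + r_i, y̲_i = o_i.2 − r_i, ȳ_i = o_i.2 + r_i. Let a < b be reals such that for every i, neither x̲_i nor x̄_i lies in the open interval (a, b) (a and b are consecutive event points of the sweep). Call an index i 'cut' if x̲_i < b ≤ x̄_i. Let c < d be reals such that for every cut index i, neither y̲_i nor ȳ_i lies in the open interval (c, d). Then for every point q with q.1 ∈ (a, b) and q.2 ∈ (c, d): q ∈ B_i if and only if x̲_i < b ≤ x̄_i and y̲_i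 ≤ c and d ≤ ȳ_i. In particular, all points of the open rectangle (a, b) × (c, d) belong to exactly the same balls B_i. -/
/-- Lemma 1: the membership (RNN) set of any point of the open subregion
(a,b) × (c,d) between consecutive events / line-status elements. -/
theorem rnn_set_of_subregion
    {I : Type*} (o : I → ℝ × ℝ) (r : I → ℝ) (hr : ∀ i, 0 ≤ r i)
    (a b : ℝ) (hab : a < b)
    (hx : ∀ i, (o i).1 - r i ∉ Set.Ioo a b ∧ (o i).1 + r i ∉ Set.Ioo a b)
    (c d : ℝ) (hcd : c < d)
    (hy : ∀ i, (o i).1 - r i < b → b ≤ (o i).1 + r i →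
      (o i).2 - r i ∉ Set.Ioo c d ∧ (o i).2 + r i ∉ Set.Ioo c d)
    (q : ℝ × ℝ) (hq1 : q.1 ∈ Set.Ioo a b) (hq2 : q.2 ∈ Set.Ioo c d) (i : I) :
    q ∈ Metric.closedBall (o i) (r i) ↔
      ((o i).1 - r i < b ∧ b ≤ (o i).1 + r i ∧
        (o i).2 - r i ≤ c ∧ d ≤ (o i).2 + r i) := by
  obtain ⟨hqa, hqb⟩ := hq1
  obtain ⟨hqc, hqd⟩ := hq2
  have hball : q ∈ Metric.closedBall (o i) (r i) ↔
      ((o i).1 - r i ≤ q.1 ∧ q.1 ≤ (o i).1 + r i ∧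
        (o i).2 - r i ≤ q.2 ∧ q.2 ≤ (o i).2 + r i) := by
    simp only [Metric.mem_closedBall, Prod.dist_eq, Real.dist_eq, max_le_iff, abs_sub_le_iff]
    constructor
    · rintro ⟨⟨h1, h2⟩, h3, h4⟩; constructor <;> [linarith; constructor] <;>
        [linarith; exact ⟨by linarith, by linarith⟩]
    · rintro ⟨h1, h2, h3, h4⟩; exact ⟨⟨by linarith, by linarith⟩, by linarith, by linarith⟩
  rw [hball]
  constructor
  · rintro ⟨h1, h2, h3, h4⟩
    have hb1 : (o i).1 - r i < b := lt_of_le_of_lt h1 hqb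
    have hb2 : b ≤ (o i).1 + r i := by
      by_contra h
      exact (hx i).2 ⟨lt_of_lt_of_le hqa h2, lt_of_not_ge h⟩
    refine ⟨hb1, hb2, ?_, ?_⟩
    · by_contra h
      exact (hy i hb1 hb2).1 ⟨lt_of_not_ge h, lt_of_le_of_lt h3 hqd⟩
    · by_contra h
      exact (hy i hb1 hb2).2 ⟨lt_of_lt_of_le hqc h4, lt_of_not_ge h⟩
  · rintro ⟨h1, h2, h3, h4⟩
    have hxa : (o i).1 - r i ≤ a := by
      by_contra h
      exact (hx i).1 ⟨lt_of_not_ge h, h1⟩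
    exact ⟨le_of_lt (lt_of_le_of_lt hxa hqa), le_of_lt (lt_of_lt_of_le hqb h2),
      le_of_lt (lt_of_le_of_lt h3 hqc), le_of_lt (lt_of_lt_of_le hqd h4)⟩
end

section
/- Let {B_i}_{i∈I} be closed balls B_i = closedBall(o_i, r_i) in ℝ × ℝ with the sup metric, i.e., the axis-aligned squares [x̲_i, x̄_i] × [y̲_i, ȳ_i]. Fix an index c₀ ∈ I and reals a < b < e such that for every i ≠ c₀, neither x̲_i nor x̄_i lies in the open interval (a, e) (so b is an event point at which only B_{c₀} is inserted into or removed from the sweep line, and a, e are the adjacent event points). Let c < d be reals such that: (i) for every i ≠ c₀ with x̲_i ≤ a and e ≤ x̄_i, neither y̲_i nor ȳ_i lies in (c, d); (ii) neither y̲_{c₀} nor ȳ_{c₀} lies in (c, d); and (iii) it is not the case that both y̲_{c₀} ≤ c and d ≤ ȳ_{c₀} (the pair (c, d) is not within the changed interval [y̲_{c₀}, ȳ_{c₀}]). Then for all q₁ ∈ (a, b) × (c, d) and q₂ ∈ (b, e) × (c, d), {i : q₁ ∈ B_i} = {i : q₂ ∈ B_i}. -/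
lemma mem_closedBall_prod_iff (q p : ℝ × ℝ) (s : ℝ) :
    q ∈ Metric.closedBall p s ↔
      (p.1 - s ≤ q.1 ∧ q.1 ≤ p.1 + s) ∧ (p.2 - s ≤ q.2 ∧ q.2 ≤ p.2 + s) := by
  simp only [Metric.mem_closedBall, Prod.dist_eq, Real.dist_eq, max_le_iff, abs_sub_le_iff]
  constructor
  · rintro ⟨⟨h1, h2⟩, h3, h4⟩
    exact ⟨⟨by linarith, by linarith⟩, by linarith, by linarith⟩
  · rintro ⟨⟨h1, h2⟩, h3, h4⟩
    exact ⟨⟨by linarith, by linarith⟩, by linarith, by linarith⟩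

/-- Lemma 2: when a single NN-circle `B c₀` is inserted into or removed from the
sweep line at event `b`, the pairs outside the changed interval of `B c₀`
represent the same regions before and after the event. -/
theorem unchanged_outside_changed_interval
    {I : Type*} (o : I → ℝ × ℝ) (r : I → ℝ) (c₀ : I)
    (a b e : ℝ) (hab : a < b) (hbe : b < e)
    (hx : ∀ i, i ≠ c₀ →
      (o i).1 - r i ∉ Set.Ioo a e ∧ (o i).1 + r i ∉ Set.Ioo a e)
    (c d : ℝ) (hcd : c < d)
    (hy : ∀ i, i ≠ c₀ → (o i).1 - r i ≤ a → e ≤ (o i).1 + r i →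
      (o i).2 - r i ∉ Set.Ioo c d ∧ (o i).2 + r i ∉ Set.Ioo c d)
    (hyc : (o c₀).2 - r c₀ ∉ Set.Ioo c d ∧ (o c₀).2 + r c₀ ∉ Set.Ioo c d)
    (hout : ¬ ((o c₀).2 - r c₀ ≤ c ∧ d ≤ (o c₀).2 + r c₀))
    (q₁ q₂ : ℝ × ℝ)
    (hq₁ : q₁ ∈ Set.Ioo a b ×ˢ Set.Ioo c d)
    (hq₂ : q₂ ∈ Set.Ioo b e ×ˢ Set.Ioo c d) :
    {i | q₁ ∈ Metric.closedBall (o i) (r i)} =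
    {i | q₂ ∈ Metric.closedBall (o i) (r i)} := by
  obtain ⟨⟨ha1, hb1⟩, hc1, hd1⟩ := hq₁
  obtain ⟨⟨hb2, he2⟩, hc2, hd2⟩ := hq₂
  -- c₀ is in neither set
  have hc₀ : ∀ q : ℝ × ℝ, q.2 ∈ Set.Ioo c d → q ∉ Metric.closedBall (o c₀) (r c₀) := by
    intro q hq hmem
    rw [mem_closedBall_prod_iff] at hmem
    obtain ⟨_, hy1, hy2⟩ := hmem
    obtain ⟨hqc, hqd⟩ := hq
    have h1 : (o c₀).2 - r c₀ ≤ c := by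
      by_contra h; exact hyc.1 ⟨lt_of_not_ge h, by linarith⟩
    have h2 : d ≤ (o c₀).2 + r c₀ := by
      by_contra h; exact hyc.2 ⟨by linarith, lt_of_not_ge h⟩
    exact hout ⟨h1, h2⟩
  ext i
  simp only [Set.mem_setOf_eq]
  by_cases hi : i = c₀
  · subst hi
    constructor
    · intro h; exact absurd h (hc₀ q₁ ⟨hc1, hd1⟩)
    · intro h; exact absurd h (hc₀ q₂ ⟨hc2, hd2⟩)
  · rw [mem_closedBall_prod_iff, mem_closedBall_prod_iff]
    obtain ⟨hxl, hxr⟩ := hx i hi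
    constructor
    · rintro ⟨⟨h1, h2⟩, h3, h4⟩
      have hl : (o i).1 - r i ≤ a := by
        by_contra h; exact hxl ⟨lt_of_not_ge h, by linarith⟩
      have hr : e ≤ (o i).1 + r i := by
        by_contra h; exact hxr ⟨by linarith, lt_of_not_ge h⟩
      obtain ⟨hyl, hyr⟩ := hy i hi hl hr
      have hl2 : (o i).2 - r i ≤ c := by
        by_contra h; exact hyl ⟨lt_of_not_ge h, by linarith⟩
      have hr2 : d ≤ (o i).2 + r i := by
        by_contra h; exact hyr ⟨by linarith, lt_of_not_ge h⟩
      exact ⟨⟨by linarith, by linarith⟩, by linarith, by linarith⟩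
    · rintro ⟨⟨h1, h2⟩, h3, h4⟩
      have hl : (o i).1 - r i ≤ a := by
        by_contra h; exact hxl ⟨lt_of_not_ge h, by linarith⟩
      have hr : e ≤ (o i).1 + r i := by
        by_contra h; exact hxr ⟨by linarith, lt_of_not_ge h⟩
      obtain ⟨hyl, hyr⟩ := hy i hi hl hr
      have hl2 : (o i).2 - r i ≤ c := by
        by_contra h; exact hyl ⟨lt_of_not_ge h, by linarith⟩
      have hr2 : d ≤ (o i).2 + r i := by
        by_contra h; exact hyr ⟨by linarith, lt_of_not_ge h⟩
      exact ⟨⟨by linarith, by linarith⟩, by linarith, by linarith⟩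
end

section
/- Let n ≥ 1 be a natural number and a : Fin n → ℝ. For each index i ≠ 0, let S_i = Icc (min (a 0) (a i)) (max (a 0) (a i)) ×ˢ Icc (min (a 0) (a i)) (max (a 0) (a i)) ⊆ ℝ × ℝ, the axis-aligned square with diagonally opposite corners (a 0, a 0) and (a i, a i). Let 𝓕 = { T : Set (Fin n) | ∃ q : ℝ × ℝ, (∀ i ≠ 0, q ∉ frontier S_i) ∧ T = {i | i ≠ 0 ∧ q ∈ S_i} } be the family of distinct membership sets realized by points not lying on any square boundary. Then 𝓕 has exactly n elements if and only if a is injective (and in all cases 𝓕 has at most n elements). -/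
/-- The axis-aligned square with diagonally opposite corners (u, u) and (v, v). -/
def diagSquare (u v : ℝ) : Set (ℝ × ℝ) :=
  Set.Icc (min u v) (max u v) ×ˢ Set.Icc (min u v) (max u v)

namespace EDreduction

open Set

attribute [local instance] Classical.propDecidable

lemma isClosed_diagSquare (u v : ℝ) : IsClosed (diagSquare u v) :=
  isClosed_Icc.prod isClosed_Icc

lemma mem_diagSquare_iff {u v : ℝ} {q : ℝ × ℝ} :
    q ∈ diagSquare u v ↔
      (min u v ≤ q.1 ∧ q.1 ≤ max u v) ∧ (min u v ≤ q.2 ∧ q.2 ≤ max u v) := by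
  rw [diagSquare, Set.mem_prod, Set.mem_Icc, Set.mem_Icc]

lemma mem_interior_diagSquare_iff {u v : ℝ} {q : ℝ × ℝ} :
    q ∈ interior (diagSquare u v) ↔
      (min u v < q.1 ∧ q.1 < max u v) ∧ (min u v < q.2 ∧ q.2 < max u v) := by
  rw [diagSquare, interior_prod_eq, interior_Icc, Set.mem_prod, Set.mem_Ioo, Set.mem_Ioo]

lemma mem_of_not_frontier {u v : ℝ} {q : ℝ × ℝ}
    (h : q ∉ frontier (diagSquare u v)) (hq : q ∈ diagSquare u v) :
    q ∈ interior (diagSquare u v) := by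
  by_contra hi
  exact h (((isClosed_diagSquare u v).frontier_eq) ▸ ⟨hq, hi⟩)

variable {m : ℕ}

def Phi (a : Fin (m+1) → ℝ) (x : ℝ) : Set (Fin (m+1)) :=
  {j | j ≠ 0 ∧ (a 0 < x ∧ x < a j ∨ a j < x ∧ x < a 0)}

def Fam (a : Fin (m+1) → ℝ) : Set (Set (Fin (m+1))) :=
  {T | ∃ q : ℝ × ℝ,
    (∀ i, i ≠ 0 → q ∉ frontier (diagSquare (a 0) (a i))) ∧
    T = {i | i ≠ 0 ∧ q ∈ diagSquare (a 0) (a i)}}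

def Avoid (a : Fin (m+1) → ℝ) : Set ℝ := {x | ∀ j, a j ≠ x}

lemma empty_mem_PhiA (a : Fin (m+1) → ℝ) :
    (∅ : Set (Fin (m+1))) ∈ Phi a '' Avoid a := by
  have hne : (Finset.univ : Finset (Fin (m+1))).Nonempty := Finset.univ_nonempty
  set X := (Finset.univ.sup' hne a) + 1 with hX
  have hlt : ∀ j, a j < X := fun j =>
    lt_of_le_of_lt (Finset.le_sup' a (Finset.mem_univ j)) (by simp [hX])
  refine ⟨X, fun j => (hlt j).ne, ?_⟩
  ext j
  simp only [Phi, mem_setOf_eq, mem_empty_iff_false, iff_false]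
  rintro ⟨-, ⟨-, h2⟩ | ⟨-, h2⟩⟩
  · exact absurd (hlt j) (asymm h2)
  · exact absurd (hlt 0) (asymm h2)

lemma Fam_eq (a : Fin (m+1) → ℝ) : Fam a = Phi a '' Avoid a := by
  ext T
  constructor
  · rintro ⟨q, hq, rfl⟩
    have hmem : ∀ i, i ≠ (0 : Fin (m+1)) → (q ∈ diagSquare (a 0) (a i) ↔
        (min (a 0) (a i) < q.1 ∧ q.1 < max (a 0) (a i)) ∧
        (min (a 0) (a i) < q.2 ∧ q.2 < max (a 0) (a i))) := by
      intro i hi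
      constructor
      · intro h
        exact mem_interior_diagSquare_iff.mp (mem_of_not_frontier (hq i hi) h)
      · intro h
        exact mem_diagSquare_iff.mpr ⟨⟨h.1.1.le, h.1.2.le⟩, ⟨h.2.1.le, h.2.2.le⟩⟩
    rcases lt_or_ge (a 0) (min q.1 q.2) with hzu | hzu
    · -- case a 0 < min q.1 q.2 : T = Phi (max q.1 q.2)
      have hzv : a 0 < max q.1 q.2 := lt_of_lt_of_le hzu min_le_max
      have hvA : max q.1 q.2 ∈ Avoid a := by
        intro j hj
        rcases eq_or_ne j 0 with rfl | hj0
        · exact (ne_of_lt hzv) hj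
        · have h1 : min (a 0) (a j) = a 0 := min_eq_left (by rw [hj]; exact hzv.le)
          have h2 : max (a 0) (a j) = a j := max_eq_right (by rw [hj]; exact hzv.le)
          have hq' : q ∈ diagSquare (a 0) (a j) := by
            rw [mem_diagSquare_iff, h1, h2, hj]
            exact ⟨⟨(lt_of_lt_of_le hzu (min_le_left _ _)).le, le_max_left _ _⟩,
                   ⟨(lt_of_lt_of_le hzu (min_le_right _ _)).le, le_max_right _ _⟩⟩
          have h := (hmem j hj0).mp hq'
          rw [h2, hj] at h
          exact absurd (max_lt h.1.2 h.2.2) (lt_irrefl _)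
      have hset : {i : Fin (m+1) | i ≠ 0 ∧ q ∈ diagSquare (a 0) (a i)} =
          Phi a (max q.1 q.2) := by
        ext i
        simp only [Phi, mem_setOf_eq]
        constructor
        · rintro ⟨hi0, hqi⟩
          have h := (hmem i hi0).mp hqi
          refine ⟨hi0, Or.inl ⟨hzv, ?_⟩⟩
          rcases le_or_gt (a i) (a 0) with h' | h'
          · exfalso
            rw [max_eq_left h'] at h
            exact absurd (lt_of_lt_of_le hzu (min_le_left _ _)) (asymm h.1.2)
          · rw [max_eq_right h'.le] at h
            exact max_lt h.1.2 h.2.2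
        · rintro ⟨hi0, ⟨-, hvi⟩ | ⟨-, hvz⟩⟩
          · refine ⟨hi0, (hmem i hi0).mpr ?_⟩
            rw [min_eq_left (hzv.trans hvi).le, max_eq_right (hzv.trans hvi).le]
            exact ⟨⟨lt_of_lt_of_le hzu (min_le_left _ _), lt_of_le_of_lt (le_max_left _ _) hvi⟩,
                   ⟨lt_of_lt_of_le hzu (min_le_right _ _), lt_of_le_of_lt (le_max_right _ _) hvi⟩⟩
          · exact absurd hvz (asymm hzv)
      exact ⟨max q.1 q.2, hvA, hset.symm⟩
    · rcases lt_or_ge (max q.1 q.2) (a 0) with hvz | hvz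
      · -- case max q.1 q.2 < a 0 : T = Phi (min q.1 q.2)
        have huz : min q.1 q.2 < a 0 := lt_of_le_of_lt min_le_max hvz
        have huA : min q.1 q.2 ∈ Avoid a := by
          intro j hj
          rcases eq_or_ne j 0 with rfl | hj0
          · exact (ne_of_gt huz) hj
          · have h1 : max (a 0) (a j) = a 0 := max_eq_left (by rw [hj]; exact huz.le)
            have h2 : min (a 0) (a j) = a j := min_eq_right (by rw [hj]; exact huz.le)
            have hq' : q ∈ diagSquare (a 0) (a j) := by
              rw [mem_diagSquare_iff, h1, h2, hj]
              exact ⟨⟨min_le_left _ _, (lt_of_le_of_lt (le_max_left _ _) hvz).le⟩,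
                     ⟨min_le_right _ _, (lt_of_le_of_lt (le_max_right _ _) hvz).le⟩⟩
            have h := (hmem j hj0).mp hq'
            rw [h2, hj] at h
            exact absurd (lt_min h.1.1 h.2.1) (lt_irrefl _)
        have hset : {i : Fin (m+1) | i ≠ 0 ∧ q ∈ diagSquare (a 0) (a i)} =
            Phi a (min q.1 q.2) := by
          ext i
          simp only [Phi, mem_setOf_eq]
          constructor
          · rintro ⟨hi0, hqi⟩
            have h := (hmem i hi0).mp hqi
            refine ⟨hi0, Or.inr ⟨?_, huz⟩⟩
            rcases le_or_gt (a 0) (a i) with h' | h'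
            · exfalso
              rw [min_eq_left h'] at h
              exact absurd (lt_of_le_of_lt (le_max_left _ _) hvz) (asymm h.1.1)
            · rw [min_eq_right h'.le] at h
              exact lt_min h.1.1 h.2.1
          · rintro ⟨hi0, ⟨hzu', -⟩ | ⟨hiu, -⟩⟩
            · exact absurd hzu' (asymm huz)
            · refine ⟨hi0, (hmem i hi0).mpr ?_⟩
              rw [min_eq_right (hiu.trans huz).le, max_eq_left (hiu.trans huz).le]
              exact ⟨⟨lt_of_lt_of_le hiu (min_le_left _ _), lt_of_le_of_lt (le_max_left _ _) hvz⟩,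
                     ⟨lt_of_lt_of_le hiu (min_le_right _ _), lt_of_le_of_lt (le_max_right _ _) hvz⟩⟩
        exact ⟨min q.1 q.2, huA, hset.symm⟩
      · -- case min q.1 q.2 ≤ a 0 ≤ max q.1 q.2 : T = ∅
        have hT : {i : Fin (m+1) | i ≠ 0 ∧ q ∈ diagSquare (a 0) (a i)} = ∅ := by
          ext i
          simp only [mem_setOf_eq, mem_empty_iff_false, iff_false, not_and]
          intro hi0 hqi
          have h := (hmem i hi0).mp hqi
          have h1 : min (a 0) (a i) < min q.1 q.2 := lt_min h.1.1 h.2.1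
          have h2 : max q.1 q.2 < max (a 0) (a i) := max_lt h.1.2 h.2.2
          have h3 : min (a 0) (a i) < a 0 := lt_of_lt_of_le h1 hzu
          have h4 : a 0 < max (a 0) (a i) := lt_of_le_of_lt hvz h2
          have h5 : min (a 0) (a i) = a i := by
            rcases min_choice (a 0) (a i) with h' | h'
            · rw [h'] at h3; exact absurd h3 (lt_irrefl _)
            · exact h'
          have h6 : max (a 0) (a i) = a i := by
            rcases max_choice (a 0) (a i) with h' | h'
            · rw [h'] at h4; exact absurd h4 (lt_irrefl _)
            · exact h'
          rw [h5] at h1; rw [h6] at h2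
          exact absurd ((h1.trans_le min_le_max).trans h2) (lt_irrefl _)
        rw [hT]
        exact empty_mem_PhiA a
  · rintro ⟨x, hx, rfl⟩
    refine ⟨(x, x), ?_, ?_⟩
    · intro i hi hfr
      rw [(isClosed_diagSquare _ _).frontier_eq] at hfr
      obtain ⟨hS, hI⟩ := hfr
      rw [mem_diagSquare_iff] at hS
      have hmin : min (a 0) (a i) < x := by
        have hne : min (a 0) (a i) ≠ x := by
          rcases min_choice (a 0) (a i) with h' | h' <;> rw [h']
          · exact hx 0
          · exact hx i
        exact lt_of_le_of_ne hS.1.1 hne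
      have hmax : x < max (a 0) (a i) := by
        have hne : x ≠ max (a 0) (a i) := by
          rcases max_choice (a 0) (a i) with h' | h' <;> rw [h']
          · exact (hx 0).symm
          · exact (hx i).symm
        exact lt_of_le_of_ne hS.1.2 hne
      exact hI (mem_interior_diagSquare_iff.mpr ⟨⟨hmin, hmax⟩, hmin, hmax⟩)
    · ext i
      simp only [Phi, mem_setOf_eq]
      constructor
      · rintro ⟨hi0, h | h⟩
        · refine ⟨hi0, mem_diagSquare_iff.mpr ?_⟩
          exact ⟨⟨(min_le_left _ _).trans h.1.le, h.2.le.trans (le_max_right _ _)⟩,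
                 ⟨(min_le_left _ _).trans h.1.le, h.2.le.trans (le_max_right _ _)⟩⟩
        · refine ⟨hi0, mem_diagSquare_iff.mpr ?_⟩
          exact ⟨⟨(min_le_right _ _).trans h.1.le, h.2.le.trans (le_max_left _ _)⟩,
                 ⟨(min_le_right _ _).trans h.1.le, h.2.le.trans (le_max_left _ _)⟩⟩
      · rintro ⟨hi0, hqi⟩
        rw [mem_diagSquare_iff] at hqi
        have hmin : min (a 0) (a i) < x := by
          have hne : min (a 0) (a i) ≠ x := by
            rcases min_choice (a 0) (a i) with h' | h' <;> rw [h']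
            · exact hx 0
            · exact hx i
          exact lt_of_le_of_ne hqi.1.1 hne
        have hmax : x < max (a 0) (a i) := by
          have hne : x ≠ max (a 0) (a i) := by
            rcases max_choice (a 0) (a i) with h' | h' <;> rw [h']
            · exact (hx 0).symm
            · exact (hx i).symm
          exact lt_of_le_of_ne hqi.1.2 hne
        refine ⟨hi0, ?_⟩
        rcases le_total (a 0) (a i) with h' | h'
        · left; rw [min_eq_left h'] at hmin; rw [max_eq_right h'] at hmax; exact ⟨hmin, hmax⟩
        · right; rw [min_eq_right h'] at hmin; rw [max_eq_left h'] at hmax; exact ⟨hmin, hmax⟩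


noncomputable def pick (a : Fin (m+1) → ℝ) (T : Set (Fin (m+1))) : Fin (m+1) :=
  if h : ((T.toFinite.toFinset).filter
      (fun k => ∀ l ∈ T.toFinite.toFinset, |a k - a 0| ≤ |a l - a 0|)).Nonempty
  then Finset.min' _ h else 0

lemma pick_spec (a : Fin (m+1) → ℝ) {T : Set (Fin (m+1))} (hT : T.Nonempty) :
    pick a T ∈ T ∧ (∀ l ∈ T, |a (pick a T) - a 0| ≤ |a l - a 0|) ∧
      ∀ k ∈ T, (∀ l ∈ T, |a k - a 0| ≤ |a l - a 0|) → pick a T ≤ k := by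
  classical
  set s := T.toFinite.toFinset with hs
  have hsn : s.Nonempty := by
    obtain ⟨k, hk⟩ := hT
    exact ⟨k, (Set.Finite.mem_toFinset _).mpr hk⟩
  obtain ⟨k0, hk0, hk0m⟩ := s.exists_min_image (fun k => |a k - a 0|) hsn
  have hne : (s.filter (fun k => ∀ l ∈ s, |a k - a 0| ≤ |a l - a 0|)).Nonempty :=
    ⟨k0, Finset.mem_filter.mpr ⟨hk0, hk0m⟩⟩
  have hp : pick a T = Finset.min' _ hne := dif_pos hne
  have hmem := Finset.min'_mem _ hne
  rw [← hp] at hmem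
  rw [Finset.mem_filter] at hmem
  refine ⟨(Set.Finite.mem_toFinset _).mp hmem.1, ?_, ?_⟩
  · intro l hl
    exact hmem.2 l ((Set.Finite.mem_toFinset _).mpr hl)
  · intro k hk hkm
    have hkf : k ∈ s.filter (fun k => ∀ l ∈ s, |a k - a 0| ≤ |a l - a 0|) := by
      refine Finset.mem_filter.mpr ⟨(Set.Finite.mem_toFinset _).mpr hk, ?_⟩
      intro l hl
      exact hkm l ((Set.Finite.mem_toFinset _).mp hl)
    rw [hp]
    exact Finset.min'_le _ _ hkf


lemma recov (a : Fin (m+1) → ℝ) {x : ℝ} {k : Fin (m+1)}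
    (hk : k ∈ Phi a x) (hmin : ∀ l ∈ Phi a x, |a k - a 0| ≤ |a l - a 0|) :
    Phi a x = {j | j ≠ 0 ∧ (a 0 < a k ∧ a k ≤ a j ∨ a j ≤ a k ∧ a k < a 0)} := by
  obtain ⟨hk0, hcase⟩ := hk
  rcases hcase with ⟨hzx, hxk⟩ | ⟨hkx, hxz⟩
  · ext j
    simp only [Phi, mem_setOf_eq]
    constructor
    · rintro ⟨hj0, ⟨-, hxj⟩ | ⟨-, hxz'⟩⟩
      · refine ⟨hj0, Or.inl ⟨hzx.trans hxk, ?_⟩⟩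
        have h1 := hmin j ⟨hj0, Or.inl ⟨hzx, hxj⟩⟩
        rw [abs_of_pos (sub_pos.mpr (hzx.trans hxk)), abs_of_pos (sub_pos.mpr (hzx.trans hxj))] at h1
        linarith
      · exact absurd hxz' (asymm hzx)
    · rintro ⟨hj0, ⟨hzk, hkj⟩ | ⟨-, hkz⟩⟩
      · exact ⟨hj0, Or.inl ⟨hzx, lt_of_lt_of_le hxk hkj⟩⟩
      · exact absurd (hzx.trans hxk) (asymm hkz)
  · ext j
    simp only [Phi, mem_setOf_eq]
    constructor
    · rintro ⟨hj0, ⟨hzx', -⟩ | ⟨hjx, -⟩⟩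
      · exact absurd hzx' (asymm hxz)
      · refine ⟨hj0, Or.inr ⟨?_, hkx.trans hxz⟩⟩
        have h1 := hmin j ⟨hj0, Or.inr ⟨hjx, hxz⟩⟩
        rw [abs_of_neg (sub_neg.mpr (hkx.trans hxz)), abs_of_neg (sub_neg.mpr (hjx.trans hxz))] at h1
        linarith
    · rintro ⟨hj0, ⟨hzk, -⟩ | ⟨hjk, hkz⟩⟩
      · exact absurd (hkx.trans hxz) (asymm hzk)
      · exact ⟨hj0, Or.inr ⟨lt_of_le_of_lt hjk hkx, hxz⟩⟩


lemma mem_fam_sdiff (a : Fin (m+1) → ℝ) {T : Set (Fin (m+1))}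
    (hT : T ∈ Fam a \ {∅}) : (∃ x, T = Phi a x) ∧ T.Nonempty := by
  obtain ⟨hTF, hT0⟩ := hT
  rw [Fam_eq] at hTF
  obtain ⟨x, -, rfl⟩ := hTF
  exact ⟨⟨x, rfl⟩, Set.nonempty_iff_ne_empty.mpr hT0⟩

lemma pick_injOn (a : Fin (m+1) → ℝ) : InjOn (pick a) (Fam a \ {∅}) := by
  intro T hT T' hT' hpp
  obtain ⟨⟨x, rfl⟩, hne⟩ := mem_fam_sdiff a hT
  obtain ⟨⟨y, rfl⟩, hne'⟩ := mem_fam_sdiff a hT'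
  obtain ⟨h1, h2, -⟩ := pick_spec a hne
  obtain ⟨h1', h2', -⟩ := pick_spec a hne'
  rw [recov a h1 h2, recov a h1' h2', hpp]

lemma pick_ne_zero (a : Fin (m+1) → ℝ) {T : Set (Fin (m+1))}
    (hT : T ∈ Fam a \ {∅}) : pick a T ≠ 0 := by
  obtain ⟨⟨x, rfl⟩, hne⟩ := mem_fam_sdiff a hT
  exact (pick_spec a hne).1.1

lemma card_bound (a : Fin (m+1) → ℝ) {B : Set (Fin (m+1))}
    (hB : ∀ T ∈ Fam a \ {∅}, pick a T ∈ B) :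
    (Fam a).ncard ≤ B.ncard + 1 := by
  have h1 : (Fam a \ {∅}).ncard = ((pick a) '' (Fam a \ {∅})).ncard :=
    (Set.ncard_image_of_injOn (pick_injOn a)).symm
  have h2 : (pick a) '' (Fam a \ {∅}) ⊆ B := by
    rintro _ ⟨T, hT, rfl⟩; exact hB T hT
  have h3 := Set.ncard_le_ncard h2 (toFinite B)
  have h4 : Fam a ⊆ insert ∅ (Fam a \ {∅}) := by
    intro T hT
    by_cases hT0 : T = ∅
    · exact hT0 ▸ mem_insert _ _
    · exact mem_insert_of_mem _ ⟨hT, hT0⟩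
  calc (Fam a).ncard ≤ (insert ∅ (Fam a \ {∅})).ncard :=
        Set.ncard_le_ncard h4 (toFinite _)
    _ ≤ (Fam a \ {∅}).ncard + 1 := Set.ncard_insert_le _ _
    _ ≤ B.ncard + 1 := by rw [h1]; omega

lemma ncard_ne_zero_set : ({k : Fin (m+1) | k ≠ 0}).ncard = m := by
  have h : ({k : Fin (m+1) | k ≠ 0}) = ({0} : Set (Fin (m+1)))ᶜ := by
    ext k; simp
  have h2 := Set.ncard_add_ncard_compl ({0} : Set (Fin (m+1)))
  rw [Set.ncard_singleton, Nat.card_eq_fintype_card, Fintype.card_fin] at h2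
  rw [h]; omega

lemma ncard_ne_two_set {b : Fin (m+1)} (hb : b ≠ 0) :
    ({k : Fin (m+1) | k ≠ 0 ∧ k ≠ b}).ncard = m - 1 := by
  have h : ({k : Fin (m+1) | k ≠ 0 ∧ k ≠ b}) = ({0, b} : Set (Fin (m+1)))ᶜ := by
    ext k; simp [not_or]
  have h2 := Set.ncard_add_ncard_compl ({0, b} : Set (Fin (m+1)))
  rw [Set.ncard_pair (Ne.symm hb), Nat.card_eq_fintype_card, Fintype.card_fin] at h2
  rw [h]; omega

lemma upper (a : Fin (m+1) → ℝ) : (Fam a).ncard ≤ m + 1 := by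
  have := card_bound a (B := {k : Fin (m+1) | k ≠ 0})
    (fun T hT => pick_ne_zero a hT)
  rw [ncard_ne_zero_set] at this
  exact this

lemma one_le_m {b : Fin (m+1)} (hb : b ≠ 0) : 1 ≤ m := by
  rcases Nat.eq_zero_or_pos m with rfl | h
  · exact absurd (Fin.fin_one_eq_zero b) hb
  · exact h

lemma bound_of_bad (a : Fin (m+1) → ℝ) {b : Fin (m+1)} (hb : b ≠ 0)
    (hbad : ∀ T ∈ Fam a \ {∅}, pick a T ≠ b) : (Fam a).ncard ≤ m := by
  have h1 := card_bound a (B := {k : Fin (m+1) | k ≠ 0 ∧ k ≠ b})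
    (fun T hT => ⟨pick_ne_zero a hT, hbad T hT⟩)
  rw [ncard_ne_two_set hb] at h1
  have := one_le_m hb
  omega

lemma not_inj_bound (a : Fin (m+1) → ℝ) (hninj : ¬ Function.Injective a) :
    (Fam a).ncard ≤ m := by
  obtain ⟨i, j, hval, hij⟩ := Function.not_injective_iff.mp hninj
  by_cases hz : ∃ b : Fin (m+1), b ≠ 0 ∧ a b = a 0
  · obtain ⟨b, hb0, hbz⟩ := hz
    refine bound_of_bad a hb0 ?_
    intro T hT hpb
    obtain ⟨⟨x, rfl⟩, hne⟩ := mem_fam_sdiff a hT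
    have hmem := (pick_spec a hne).1
    rw [hpb] at hmem
    obtain ⟨-, ⟨h1, h2⟩ | ⟨h1, h2⟩⟩ := hmem
    · rw [hbz] at h2; exact absurd (h1.trans h2) (lt_irrefl _)
    · rw [hbz] at h1; exact absurd (h1.trans h2) (lt_irrefl _)
  · push_neg at hz
    have hi0 : i ≠ 0 := by
      rintro rfl
      have hj0 : j ≠ (0 : Fin (m+1)) := fun h => hij h.symm
      exact hz j hj0 hval.symm
    have hj0 : j ≠ 0 := by
      rintro rfl
      exact hz i hi0 hval
    -- use b = max i j, c = min i j
    have hcb : min i j < max i j := min_lt_max.mpr hij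
    have hvalcb : a (min i j) = a (max i j) := by
      rcases le_total i j with h | h
      · rw [min_eq_left h, max_eq_right h]; exact hval
      · rw [min_eq_right h, max_eq_left h]; exact hval.symm
    have hb0 : max i j ≠ 0 := by
      intro h
      rw [h] at hcb
      exact absurd hcb (not_lt_of_ge (Fin.zero_le _))
    have hc0 : min i j ≠ 0 := by
      intro h
      refine hz (max i j) hb0 ?_
      rw [← hvalcb, h]
    refine bound_of_bad a hb0 ?_
    intro T hT hpb
    obtain ⟨⟨x, rfl⟩, hne⟩ := mem_fam_sdiff a hT
    obtain ⟨h1, h2, h3⟩ := pick_spec a hne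
    rw [hpb] at h1 h2 h3
    -- min i j is also in Phi a x with the same value
    have hcmem : min i j ∈ Phi a x := by
      obtain ⟨-, hcase⟩ := h1
      exact ⟨hc0, by rw [hvalcb]; exact hcase⟩
    have hcmin : ∀ l ∈ Phi a x, |a (min i j) - a 0| ≤ |a l - a 0| := by
      intro l hl; rw [hvalcb]; exact h2 l hl
    have := h3 (min i j) hcmem hcmin
    exact absurd (lt_of_le_of_lt this hcb) (lt_irrefl _)


def U (a : Fin (m+1) → ℝ) (i : Fin (m+1)) : Set (Fin (m+1)) :=
  {j | j ≠ 0 ∧ (a 0 < a i ∧ a i ≤ a j ∨ a j ≤ a i ∧ a i < a 0)}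

lemma U_mem (a : Fin (m+1) → ℝ) {i : Fin (m+1)} (hia : a i ≠ a 0) :
    U a i ∈ Phi a '' Avoid a := by
  rcases lt_or_gt_of_ne hia with hlt | hgt
  · -- a i < a 0
    set s := (insert (a 0) (Finset.univ.image a)).filter (fun t => a i < t) with hs
    have hzs : a 0 ∈ s := by
      rw [hs]; exact Finset.mem_filter.mpr ⟨Finset.mem_insert_self _ _, hlt⟩
    have hsn : s.Nonempty := ⟨_, hzs⟩
    set c := s.min' hsn with hc
    have hcz : c ≤ a 0 := Finset.min'_le _ _ hzs
    have hic : a i < c := (Finset.mem_filter.mp (s.min'_mem hsn)).2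
    set x := (a i + c) / 2 with hx
    have hix : a i < x := by rw [hx]; linarith
    have hxc : x < c := by rw [hx]; linarith
    have hxA : x ∈ Avoid a := by
      intro j
      rcases le_or_gt (a j) (a i) with h | h
      · exact ne_of_lt (lt_of_le_of_lt h hix)
      · have hjs : a j ∈ s := by
          rw [hs]
          exact Finset.mem_filter.mpr
            ⟨Finset.mem_insert_of_mem (Finset.mem_image_of_mem a (Finset.mem_univ j)), h⟩
        exact ne_of_gt (lt_of_lt_of_le hxc (Finset.min'_le _ _ hjs))
    have hxz : x < a 0 := lt_of_lt_of_le hxc hcz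
    refine ⟨x, hxA, ?_⟩
    ext j
    simp only [Phi, U, mem_setOf_eq]
    constructor
    · rintro ⟨hj0, ⟨hzx, -⟩ | ⟨hjx, -⟩⟩
      · exact absurd hzx (asymm hxz)
      · refine ⟨hj0, Or.inr ⟨?_, hlt⟩⟩
        by_contra h
        push_neg at h  -- a i < a j
        have hjs : a j ∈ s := by
          rw [hs]
          exact Finset.mem_filter.mpr
            ⟨Finset.mem_insert_of_mem (Finset.mem_image_of_mem a (Finset.mem_univ j)), h⟩
        exact absurd (lt_of_lt_of_le hxc (Finset.min'_le _ _ hjs)) (asymm hjx)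
    · rintro ⟨hj0, ⟨hzi, -⟩ | ⟨hji, -⟩⟩
      · exact absurd hzi (asymm hlt)
      · exact ⟨hj0, Or.inr ⟨lt_of_le_of_lt hji hix, hxz⟩⟩
  · -- a 0 < a i
    set s := (insert (a 0) (Finset.univ.image a)).filter (fun t => t < a i) with hs
    have hzs : a 0 ∈ s := by
      rw [hs]; exact Finset.mem_filter.mpr ⟨Finset.mem_insert_self _ _, hgt⟩
    have hsn : s.Nonempty := ⟨_, hzs⟩
    set c := s.max' hsn with hc
    have hcz : a 0 ≤ c := Finset.le_max' _ _ hzs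
    have hic : c < a i := (Finset.mem_filter.mp (s.max'_mem hsn)).2
    set x := (c + a i) / 2 with hx
    have hix : x < a i := by rw [hx]; linarith
    have hxc : c < x := by rw [hx]; linarith
    have hxA : x ∈ Avoid a := by
      intro j
      rcases le_or_gt (a i) (a j) with h | h
      · exact ne_of_gt (lt_of_lt_of_le hix h)
      · have hjs : a j ∈ s := by
          rw [hs]
          exact Finset.mem_filter.mpr
            ⟨Finset.mem_insert_of_mem (Finset.mem_image_of_mem a (Finset.mem_univ j)), h⟩
        exact ne_of_lt (lt_of_le_of_lt (Finset.le_max' _ _ hjs) hxc)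
    have hxz : a 0 < x := lt_of_le_of_lt hcz hxc
    refine ⟨x, hxA, ?_⟩
    ext j
    simp only [Phi, U, mem_setOf_eq]
    constructor
    · rintro ⟨hj0, ⟨-, hxj⟩ | ⟨-, hzx⟩⟩
      · refine ⟨hj0, Or.inl ⟨hgt, ?_⟩⟩
        by_contra h
        push_neg at h  -- a j < a i
        have hjs : a j ∈ s := by
          rw [hs]
          exact Finset.mem_filter.mpr
            ⟨Finset.mem_insert_of_mem (Finset.mem_image_of_mem a (Finset.mem_univ j)), h⟩
        exact absurd (lt_of_le_of_lt (Finset.le_max' _ _ hjs) hxc) (asymm hxj)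
      · exact absurd hzx (asymm hxz)
    · rintro ⟨hj0, ⟨-, hij⟩ | ⟨-, hiz⟩⟩
      · exact ⟨hj0, Or.inl ⟨hxz, lt_of_lt_of_le hix hij⟩⟩
      · exact absurd hiz (asymm hgt)

lemma lower (a : Fin (m+1) → ℝ) (hinj : Function.Injective a) :
    m + 1 ≤ (Fam a).ncard := by
  set h : Fin (m+1) → Set (Fin (m+1)) := fun i => if i = 0 then ∅ else U a i with hh
  have hne0 : ∀ i : Fin (m+1), i ≠ 0 → a i ≠ a 0 :=
    fun i hi he => hi (hinj he)
  have hmemU : ∀ i : Fin (m+1), i ≠ 0 → i ∈ U a i := by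
    intro i hi
    rcases lt_or_gt_of_ne (hne0 i hi) with hlt | hgt
    · exact ⟨hi, Or.inr ⟨le_refl _, hlt⟩⟩
    · exact ⟨hi, Or.inl ⟨hgt, le_refl _⟩⟩
  have hinjh : Function.Injective h := by
    intro i j hij
    by_cases hi : i = 0 <;> by_cases hj : j = 0
    · rw [hi, hj]
    · exfalso
      rw [hh] at hij
      simp only [if_pos hi, if_neg hj] at hij
      exact (hij ▸ hmemU j hj : j ∈ (∅ : Set (Fin (m+1))))
    · exfalso
      rw [hh] at hij
      simp only [if_pos hj, if_neg hi] at hij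
      exact (hij ▸ hmemU i hi : i ∈ (∅ : Set (Fin (m+1))))
    · rw [hh] at hij
      simp only [if_neg hi, if_neg hj] at hij
      have hji : j ∈ U a i := hij ▸ hmemU j hj
      have hij' : i ∈ U a j := hij.symm ▸ hmemU i hi
      obtain ⟨-, h1⟩ := hji
      obtain ⟨-, h2⟩ := hij'
      have : a i = a j := by
        rcases h1 with ⟨hzi, hij2⟩ | ⟨hji2, hiz⟩ <;> rcases h2 with ⟨hzj, hji3⟩ | ⟨hij3, hjz⟩ <;>
          linarith
      exact hinj this
  have hsub : Set.range h ⊆ Fam a := by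
    rintro _ ⟨i, rfl⟩
    rw [Fam_eq]
    by_cases hi : i = 0
    · rw [hh]; simp only [if_pos hi]; exact empty_mem_PhiA a
    · rw [hh]; simp only [if_neg hi]; exact U_mem a (hne0 i hi)
  calc m + 1 = (Set.univ : Set (Fin (m+1))).ncard := by
        rw [Set.ncard_univ, Nat.card_eq_fintype_card, Fintype.card_fin]
    _ = (h '' Set.univ).ncard := (Set.ncard_image_of_injective _ hinjh).symm
    _ = (Set.range h).ncard := by rw [Set.image_univ]
    _ ≤ (Fam a).ncard := Set.ncard_le_ncard hsub (toFinite _)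


end EDreduction

/-- The Element Distinctness reduction: the arrangement of the squares with
corners (a 0, a 0) and (a i, a i), i ≠ 0, realizes at most n distinct
membership (RNN) sets, and exactly n of them iff the numbers a i are distinct. -/
theorem element_distinctness_reduction
    (n : ℕ) (hn : 1 ≤ n) (a : Fin n → ℝ)
    (𝓕 : Set (Set (Fin n)))
    (h𝓕 : 𝓕 = {T : Set (Fin n) | ∃ q : ℝ × ℝ,
      (∀ i : Fin n, i ≠ ⟨0, hn⟩ → q ∉ frontier (diagSquare (a ⟨0, hn⟩) (a i))) ∧
      T = {i : Fin n | i ≠ ⟨0, hn⟩ ∧ q ∈ diagSquare (a ⟨0, hn⟩) (a i)}}) :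
    𝓕.ncard ≤ n ∧ (𝓕.ncard = n ↔ Function.Injective a) := by
  obtain ⟨m, rfl⟩ : ∃ m, n = m + 1 := ⟨n - 1, by omega⟩
  subst h𝓕
  show (EDreduction.Fam a).ncard ≤ m + 1 ∧
    ((EDreduction.Fam a).ncard = m + 1 ↔ Function.Injective a)
  refine ⟨EDreduction.upper a, fun h => ?_,
    fun hinj => le_antisymm (EDreduction.upper a) (EDreduction.lower a hinj)⟩
  by_contra hninj
  have := EDreduction.not_inj_bound a hninj
  omega
end

section
/- Let B_1, …, B_n be pairwise disjoint closed balls B_i = closedBall(p_i, r_i) in ℝ × ℝ with the sup metric, with all radii r_i > 0. Then the family 𝓕 = { T : Set (Fin n) | ∃ q : ℝ × ℝ, (∀ i, q ∉ frontier B_i) ∧ T = {i | q ∈ B_i} } has exactly n + 1 elements, namely the empty set and the n singletons {i}. -/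
/-- For n pairwise disjoint closed balls (axis-aligned squares under the sup
metric) with positive radii, the membership sets realized by points off all
boundaries are exactly the empty set and the n singletons: n + 1 sets. -/
theorem disjoint_balls_regions
    (n : ℕ) (p : Fin n → ℝ × ℝ) (r : Fin n → ℝ) (hr : ∀ i, 0 < r i)
    (hdisj : Pairwise (Function.onFun Disjoint
      fun i => Metric.closedBall (p i) (r i)))
    (𝓕 : Set (Set (Fin n)))
    (h𝓕 : 𝓕 = {T : Set (Fin n) | ∃ q : ℝ × ℝ,
      (∀ i, q ∉ frontier (Metric.closedBall (p i) (r i))) ∧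
      T = {i | q ∈ Metric.closedBall (p i) (r i)}}) :
    𝓕 = insert ∅ (Set.range fun i : Fin n => ({i} : Set (Fin n))) ∧
      𝓕.ncard = n + 1 := by
  have hfr : ∀ i (q : ℝ × ℝ), q ∉ Metric.closedBall (p i) (r i) →
      q ∉ frontier (Metric.closedBall (p i) (r i)) := by
    intro i q hq hf
    exact hq (Metric.isClosed_closedBall.frontier_subset hf)
  have key : 𝓕 = insert ∅ (Set.range fun i : Fin n => ({i} : Set (Fin n))) := by
    subst h𝓕
    ext T
    constructor
    · rintro ⟨q, hq, rfl⟩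
      by_cases hT : ∃ i, q ∈ Metric.closedBall (p i) (r i)
      · obtain ⟨i, hi⟩ := hT
        right
        have hset : {j | q ∈ Metric.closedBall (p j) (r j)} = ({i} : Set (Fin n)) := by
          apply Set.eq_singleton_iff_unique_mem.mpr
          refine ⟨hi, fun j hj => ?_⟩
          by_contra hji
          exact Set.disjoint_left.mp (hdisj hji) hj hi
        exact ⟨i, hset.symm⟩
      · left
        push_neg at hT
        have hset : {j | q ∈ Metric.closedBall (p j) (r j)} = (∅ : Set (Fin n)) :=
          Set.eq_empty_iff_forall_notMem.mpr hT
        exact hset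
    · rintro (rfl | ⟨i, rfl⟩)
      · -- a point outside all balls
        obtain ⟨M, hM⟩ := (Finset.univ.image fun i => (p i).1 + r i).exists_le
        have houts : ∀ j, (M + 1, (0:ℝ)) ∉ Metric.closedBall (p j) (r j) := by
          intro j h
          have h1 : (p j).1 + r j ≤ M := hM _ (Finset.mem_image_of_mem _ (Finset.mem_univ j))
          have := h.out
          rw [Prod.dist_eq] at this
          have h2 : dist (M + 1) (p j).1 ≤ r j := le_trans (le_max_left _ _) this
          rw [Real.dist_eq, abs_le] at h2
          linarith [h2.2]
        exact ⟨(M + 1, 0), fun i => hfr i _ (houts i), (Set.eq_empty_iff_forall_notMem.mpr houts).symm⟩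
      · refine ⟨p i, fun j => ?_, ?_⟩
        · by_cases hji : j = i
          · subst hji
            rw [frontier_closedBall _ (hr j).ne']
            simp only [Metric.mem_sphere, dist_self]
            exact (hr j).ne
          · exact hfr j _ fun h =>
              Set.disjoint_left.mp (hdisj (Ne.symm hji))
                (Metric.mem_closedBall_self (hr i).le) h
        · have hset : {j | p i ∈ Metric.closedBall (p j) (r j)} = ({i} : Set (Fin n)) := by
            apply Set.eq_singleton_iff_unique_mem.mpr
            refine ⟨Metric.mem_closedBall_self (hr i).le, fun j hj => ?_⟩
            by_contra hji
            exact Set.disjoint_left.mp (hdisj hji) hj (Metric.mem_closedBall_self (hr i).le)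
          exact hset.symm
  refine ⟨key, ?_⟩
  have hinj : Function.Injective (fun i : Fin n => ({i} : Set (Fin n))) := by
    intro i j hij
    simpa using hij
  rw [key, Set.ncard_insert_of_notMem, ← Set.image_univ,
    Set.ncard_image_of_injective _ hinj, Set.ncard_univ, Nat.card_eq_fintype_card,
    Fintype.card_fin]
  rintro ⟨i, hi⟩
  exact (Set.singleton_ne_empty i) hi
end

section
/- Let O be a finite set of points in the Euclidean plane (EuclideanSpace ℝ (Fin 2) with the L₂ metric) and let q be any point. Then the monochromatic reverse nearest neighbor set {o ∈ O : o ≠ q ∧ ∀ o' ∈ O, o' ≠ o → dist(o, q) ≤ dist(o, o')} (the points of O whose nearest neighbor within O, other than themselves, is at least as far as q) has at most 6 elements. -/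
open Complex Real

noncomputable def cpt (p : EuclideanSpace ℝ (Fin 2)) : ℂ := ⟨p 0, p 1⟩

lemma dist_eq_cpt (p p' : EuclideanSpace ℝ (Fin 2)) :
    dist p p' = ‖cpt p - cpt p'‖ := by
  rw [EuclideanSpace.dist_eq, Fin.sum_univ_two, Complex.norm_def, Complex.normSq_apply]
  simp [cpt, Real.dist_eq]
  ring_nf

lemma key_geom {z w : ℂ} (hz : z ≠ 0) (hw : w ≠ 0)
    (h : |Complex.arg z - Complex.arg w| < π / 3) :
    ‖z - w‖ < max (‖z‖) (‖w‖) := by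
  have hcos : (1:ℝ)/2 < Real.cos (Complex.arg z - Complex.arg w) := by
    rw [← Real.cos_abs]
    have := Real.cos_lt_cos_of_nonneg_of_le_pi (abs_nonneg _)
      (by linarith [Real.pi_pos] : π/3 ≤ π) h
    rwa [Real.cos_pi_div_three] at this
  have hz0 : 0 < ‖z‖ := norm_pos_iff.mpr hz
  have hw0 : 0 < ‖w‖ := norm_pos_iff.mpr hw
  have hre : z.re = ‖z‖ * Real.cos (Complex.arg z) := by
    rw [Complex.cos_arg hz]; field_simp
  have him : z.im = ‖z‖ * Real.sin (Complex.arg z) := by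
    rw [Complex.sin_arg]; field_simp
  have hre' : w.re = ‖w‖ * Real.cos (Complex.arg w) := by
    rw [Complex.cos_arg hw]; field_simp
  have him' : w.im = ‖w‖ * Real.sin (Complex.arg w) := by
    rw [Complex.sin_arg]; field_simp
  have hinner : z.re * w.re + z.im * w.im
      = ‖z‖ * ‖w‖ * Real.cos (Complex.arg z - Complex.arg w) := by
    rw [hre, him, hre', him', Real.cos_sub]; ring
  have hsq : ‖z - w‖ ^ 2
      = ‖z‖ ^ 2 + ‖w‖ ^ 2
        - 2 * (‖z‖ * ‖w‖ * Real.cos (Complex.arg z - Complex.arg w)) := by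
    rw [← hinner, Complex.sq_norm, Complex.sq_norm, Complex.sq_norm,
      Complex.normSq_apply, Complex.normSq_apply, Complex.normSq_apply]
    simp only [Complex.sub_re, Complex.sub_im]; ring
  rcases le_total (‖z‖) (‖w‖) with hle | hle
  · rw [max_eq_right hle]
    have : ‖z - w‖ ^ 2 < ‖w‖ ^ 2 := by
      nlinarith [mul_pos hz0 hw0, mul_le_mul_of_nonneg_left hle hz0.le]
    exact lt_of_pow_lt_pow_left₀ 2 hw0.le this
  · rw [max_eq_left hle]
    have : ‖z - w‖ ^ 2 < ‖z‖ ^ 2 := by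
      nlinarith [mul_pos hz0 hw0, mul_le_mul_of_nonneg_left hle hw0.le]
    exact lt_of_pow_lt_pow_left₀ 2 hz0.le this

/-- In the Euclidean plane, a monochromatic RNN set has at most six elements. -/
theorem mono_rnn_at_most_six
    (O : Finset (EuclideanSpace ℝ (Fin 2))) (q : EuclideanSpace ℝ (Fin 2)) :
    {o : EuclideanSpace ℝ (Fin 2) |
      o ∈ O ∧ o ≠ q ∧ ∀ o' ∈ O, o' ≠ o → dist o q ≤ dist o o'}.ncard ≤ 6 := by
  classical
  set S := {o : EuclideanSpace ℝ (Fin 2) |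
      o ∈ O ∧ o ≠ q ∧ ∀ o' ∈ O, o' ≠ o → dist o q ≤ dist o o'} with hS
  have hpi := Real.pi_pos
  have h30 : (0:ℝ) < π / 3 := by linarith
  set f : EuclideanSpace ℝ (Fin 2) → ℤ :=
    fun o => ⌈(Complex.arg (cpt o - cpt q) + π) / (π / 3)⌉ with hfdef
  have hz0 : ∀ o ∈ S, cpt o - cpt q ≠ 0 := by
    intro o ho h0
    have : dist o q = 0 := by rw [dist_eq_cpt, h0, norm_zero]
    exact ho.2.1 (by rwa [dist_eq_zero] at this)
  have hmaps : ∀ o ∈ S, f o ∈ (Finset.Icc (1:ℤ) 6 : Set ℤ) := by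
    intro o ho
    have harg1 := Complex.neg_pi_lt_arg (cpt o - cpt q)
    have harg2 := Complex.arg_le_pi (cpt o - cpt q)
    simp only [Finset.coe_Icc, Set.mem_Icc, hfdef]
    constructor
    · exact Int.ceil_pos.mpr (div_pos (by linarith) h30)
    · rw [show (6:ℤ) = ((6:ℕ):ℤ) by norm_num, Int.ceil_le]
      rw [div_le_iff₀ h30]
      push_cast
      linarith
  have hinj : Set.InjOn f S := by
    intro o ho o' ho' hfe
    by_contra hne
    set z := cpt o - cpt q with hzdef
    set w := cpt o' - cpt q with hwdef
    have hz := hz0 o ho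
    have hw := hz0 o' ho'
    set a := (Complex.arg z + π) / (π / 3) with hadef
    set b := (Complex.arg w + π) / (π / 3) with hbdef
    have hfo : f o = ⌈a⌉ := rfl
    have hfo' : f o' = ⌈b⌉ := rfl
    have hab : |a - b| < 1 := by
      have h1 : a ≤ (⌈a⌉ : ℝ) := Int.le_ceil _
      have h2 : (⌈a⌉ : ℝ) < a + 1 := Int.ceil_lt_add_one _
      have h3 : b ≤ (⌈b⌉ : ℝ) := Int.le_ceil _
      have h4 : (⌈b⌉ : ℝ) < b + 1 := Int.ceil_lt_add_one _
      have hceq : ⌈a⌉ = ⌈b⌉ := by rw [← hfo, ← hfo', hfe]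
      rw [hceq] at h1 h2
      rw [abs_lt]
      constructor <;> linarith
    have hargclose : |Complex.arg z - Complex.arg w| < π / 3 := by
      have hd : Complex.arg z - Complex.arg w = π / 3 * (a - b) := by
        rw [hadef, hbdef]; field_simp; ring
      rw [hd, abs_mul, abs_of_pos h30]
      calc π / 3 * |a - b| < π / 3 * 1 := by
              exact (mul_lt_mul_iff_right₀ h30).mpr hab
        _ = π / 3 := mul_one _
    have hlt := key_geom hz hw hargclose
    have hzw : z - w = cpt o - cpt o' := by rw [hzdef, hwdef]; ring
    rw [hzw, ← dist_eq_cpt, ← dist_eq_cpt, ← dist_eq_cpt] at hlt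
    have h1 := ho.2.2 o' ho'.1 (Ne.symm hne)
    have h2 := ho'.2.2 o ho.1 hne
    rcases lt_max_iff.mp hlt with h | h
    · linarith
    · have := dist_comm o o'
      linarith
  have hfin : (Finset.Icc (1:ℤ) 6 : Set ℤ).Finite := (Finset.Icc (1:ℤ) 6).finite_toSet
  have := Set.ncard_le_ncard_of_injOn f hmaps hinj hfin
  rwa [Set.ncard_coe_finset, show (Finset.Icc (1:ℤ) 6).card = 6 by decide] at this
end
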